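/- Price of stability in label denoising: any Nash equilibrium x^NE of the label denoising game has average noise rate at least that of any social-welfare maximizer x^SWM, i.e., x̄(x^NE) ≥ x̄(x^SWM). -/

import Mathlib

/-!
Suppose the equilibrium average `a` were below the optimal average `b`. Then some client `n` has
`xne n < xswm n`. Raising `n`'s noise by a small `δ` at the equilibrium and lowering it by `δ` at
the optimum both move the average by the same `η = d n δ / ∑ d`. Equilibrium says `n`'s revenue
loss `w n (g a - g (a + η))` is at least its saving `d n (f (xne n) - f (xne n + δ))`; optimality
says the total revenue gain `(∑ w) (g (b - η) - g b)` is at most the extra cost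
`d n (f (xswm n - δ) - f (xswm n))`. Since `g` is concave and decreasing and `w n ≤ ∑ w`, the
gain is at least the loss; since `f` is strictly convex, the saving strictly exceeds the extra
cost. So gain ≥ loss ≥ saving > extra cost ≥ gain, which is absurd.
-/

section Increments

variable {𝕜 : Type*} [Field 𝕜]

theorem slope_add_self (f : 𝕜 → 𝕜) (a h : 𝕜) : slope f a (a + h) = (f (a + h) - f a) / h := by
  rw [slope_def_field, add_sub_cancel_left]

variable [LinearOrder 𝕜] [IsStrictOrderedRing 𝕜] {s : Set 𝕜} {f : 𝕜 → 𝕜} {a b h : 𝕜}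

theorem ConvexOn.increment_mono (hf : ConvexOn 𝕜 s f) (ha : a ∈ s) (hbh : b + h ∈ s)
    (hab : a ≤ b) (hh : 0 ≤ h) : f (a + h) - f a ≤ f (b + h) - f b := by
  rcases hh.eq_or_lt with rfl | hh
  · simp
  rcases hab.eq_or_lt with rfl | hab
  · rfl
  have hmem : Set.Icc a (b + h) ⊆ s := hf.1.ordConnected.out ha hbh
  have hah : a + h ∈ s := hmem ⟨by linarith, by linarith⟩
  have hb : b ∈ s := hmem ⟨hab.le, by linarith⟩
  have key : slope f a (a + h) ≤ slope f b (b + h) :=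
    calc slope f a (a + h) ≤ slope f a (b + h) :=
          hf.slope_mono ha ⟨hah, by simp [hh.ne']⟩ ⟨hbh, by simp; linarith⟩ (by linarith)
      _ = slope f (b + h) a := slope_comm f a (b + h)
      _ ≤ slope f (b + h) b :=
          hf.slope_mono hbh ⟨ha, by simp; linarith⟩ ⟨hb, by simp [hh.ne']⟩ hab.le
      _ = slope f b (b + h) := slope_comm f (b + h) b
  rwa [slope_add_self, slope_add_self, div_le_div_iff_of_pos_right hh] at key

theorem StrictConvexOn.increment_strictMono (hf : StrictConvexOn 𝕜 s f) (ha : a ∈ s)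
    (hbh : b + h ∈ s) (hab : a < b) (hh : 0 < h) : f (a + h) - f a < f (b + h) - f b := by
  have hmem : Set.Icc a (b + h) ⊆ s := hf.1.ordConnected.out ha hbh
  have hah : a + h ∈ s := hmem ⟨by linarith, by linarith⟩
  have hb : b ∈ s := hmem ⟨hab.le, by linarith⟩
  have key : slope f a (a + h) < slope f b (b + h) :=
    calc slope f a (a + h) < slope f a (b + h) := by
          simp only [slope_def_field]
          exact hf.secant_strict_mono ha hah hbh (by linarith) (by linarith) (by linarith)
      _ = slope f (b + h) a := slope_comm f a (b + h)
      _ ≤ slope f (b + h) b :=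
          hf.convexOn.slope_mono hbh ⟨ha, by simp; linarith⟩ ⟨hb, by simp [hh.ne']⟩ hab.le
      _ = slope f b (b + h) := slope_comm f (b + h) b
  rwa [slope_add_self, slope_add_self, div_lt_div_iff_of_pos_right hh] at key

theorem ConcaveOn.increment_anti (hf : ConcaveOn 𝕜 s f) (ha : a ∈ s) (hbh : b + h ∈ s)
    (hab : a ≤ b) (hh : 0 ≤ h) : f (b + h) - f b ≤ f (a + h) - f a := by
  have := hf.neg.increment_mono ha hbh hab hh
  simp only [Pi.neg_apply] at this
  linarith

end Increments

theorem marginal_welfare_lt_of_marginal_payoff_le {g f : ℝ → ℝ} (hg : ConcaveOn ℝ Set.univ g)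
    (hg' : Antitone g) (hf : StrictConvexOn ℝ Set.univ f) {w W d a b η x₀ x₁ δ : ℝ}
    (hW : 0 ≤ W) (hwW : w ≤ W) (hd : 0 < d) (hη : 0 ≤ η) (hab : a + η ≤ b) (hδ : 0 < δ)
    (hx : x₀ + 2 * δ ≤ x₁) (hpayoff : w * (g (a + η) - g a) ≤ d * (f (x₀ + δ) - f x₀)) :
    W * (g b - g (b - η)) < d * (f x₁ - f (x₁ - δ)) := by
  have hg_step : g (b - η + η) - g (b - η) ≤ g (a + η) - g a :=
    hg.increment_anti trivial trivial (by linarith) hη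
  have hf_step : f (x₀ + δ) - f x₀ < f (x₁ - δ + δ) - f (x₁ - δ) :=
    hf.increment_strictMono trivial trivial (by linarith) hδ
  rw [sub_add_cancel] at hg_step hf_step
  have hg_anti : g (a + η) - g a ≤ 0 := sub_nonpos.2 (hg' (le_add_of_nonneg_right hη))
  calc W * (g b - g (b - η))
      _ ≤ W * (g (a + η) - g a) := mul_le_mul_of_nonneg_left hg_step hW
      _ ≤ w * (g (a + η) - g a) := mul_le_mul_of_nonpos_right hwW hg_anti
      _ ≤ d * (f (x₀ + δ) - f x₀) := hpayoff
      _ < d * (f x₁ - f (x₁ - δ)) := mul_lt_mul_of_pos_left hf_step hd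

open Finset

theorem Fintype.sum_apply_update {ι α M : Type*} [Fintype ι] [DecidableEq ι] [AddCommGroup M]
    (F : ι → α → M) (x : ι → α) (n : ι) (y : α) :
    ∑ i, F i (Function.update x n y i) = ∑ i, F i (x i) + (F n y - F n (x n)) := by
  rw [Fintype.sum_eq_add_sum_compl n, Fintype.sum_eq_add_sum_compl n (fun i ↦ F i (x i)),
    Function.update_self]
  have hrest : ∑ i ∈ {n}ᶜ, F i (Function.update x n y i) = ∑ i ∈ {n}ᶜ, F i (x i) :=
    Finset.sum_congr rfl fun i hi ↦ by rw [Function.update_of_ne (by simpa using hi)]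
  rw [hrest]
  abel

section LabelDenoising

variable {ι : Type*} [Fintype ι] (d w ε : ι → ℝ) (g f : ℝ → ℝ)

noncomputable def weightedAvg (x : ι → ℝ) : ℝ := (∑ i, d i * x i) / ∑ i, d i

noncomputable def payoff (n : ι) (x : ι → ℝ) : ℝ :=
  w n * g (weightedAvg d x) - d n * (f (x n) - f (ε n))

variable {d}

theorem exists_lt_of_weightedAvg_lt (hd : ∀ i, 0 ≤ d i) {x y : ι → ℝ}
    (h : weightedAvg d x < weightedAvg d y) : ∃ i, x i < y i := by
  have hD : 0 < ∑ i, d i := by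
    refine (sum_nonneg fun i _ ↦ hd i).lt_of_ne fun hD ↦ ?_
    simp [weightedAvg, ← hD] at h
  obtain ⟨i, -, hi⟩ := exists_lt_of_sum_lt ((div_lt_div_iff_of_pos_right hD).1 h)
  exact ⟨i, lt_of_mul_lt_mul_left hi (hd i)⟩

variable (d) [DecidableEq ι] (x : ι → ℝ) (n : ι) (y : ℝ)

theorem weightedAvg_update :
    weightedAvg d (Function.update x n y) = weightedAvg d x + d n / (∑ i, d i) * (y - x n) := by
  simp only [weightedAvg, Fintype.sum_apply_update (fun i t ↦ d i * t)]
  ring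

theorem payoff_update_le_iff :
    payoff d w ε g f n (Function.update x n y) ≤ payoff d w ε g f n x ↔
      w n * (g (weightedAvg d x + d n / (∑ i, d i) * (y - x n)) - g (weightedAvg d x))
        ≤ d n * (f y - f (x n)) := by
  simp only [payoff, weightedAvg_update, Function.update_self]
  constructor <;> intro h <;> linarith

theorem sum_payoff_update_le_iff :
    ∑ m, payoff d w ε g f m (Function.update x n y) ≤ ∑ m, payoff d w ε g f m x ↔
      (∑ m, w m) * (g (weightedAvg d x + d n / (∑ i, d i) * (y - x n)) - g (weightedAvg d x))
        ≤ d n * (f y - f (x n)) := by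
  simp only [payoff, sum_sub_distrib, ← sum_mul, weightedAvg_update,
    Fintype.sum_apply_update (fun m t ↦ d m * (f t - f (ε m)))]
  constructor <;> intro h <;> linarith

end LabelDenoising

theorem pos_label_denoising_general (N : ℕ) (d w ε : Fin N → ℝ)
    (hd : ∀ n, 0 < d n) (hw : ∀ n, 0 < w n)
    (g f : ℝ → ℝ)
    (hg : ConcaveOn ℝ Set.univ g) (hg' : Antitone g)
    (hf : StrictConvexOn ℝ Set.univ f)
    (P : Fin N → (Fin N → ℝ) → ℝ)
    (hP : P = fun n x => w n * g ((∑ i, d i * x i) / ∑ i, d i)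
      - d n * (f (x n) - f (ε n)))
    (xne xswm : Fin N → ℝ)
    (hne_feas : ∀ n, xne n ∈ Set.Icc 0 (ε n))
    (hne : ∀ n, ∀ y ∈ Set.Icc 0 (ε n), P n (Function.update xne n y) ≤ P n xne)
    (hswm_feas : ∀ n, xswm n ∈ Set.Icc 0 (ε n))
    (hswm : ∀ y : Fin N → ℝ, (∀ n, y n ∈ Set.Icc 0 (ε n)) →
      (∑ n, P n y) ≤ ∑ n, P n xswm) :
    (∑ i, d i * xswm i) / (∑ i, d i) ≤ (∑ i, d i * xne i) / (∑ i, d i) := by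
  replace hP : P = payoff d w ε g f := hP
  subst hP
  by_contra! hlt
  change weightedAvg d xne < weightedAvg d xswm at hlt
  obtain ⟨n, hn⟩ := exists_lt_of_weightedAvg_lt (fun i ↦ (hd i).le) hlt
  have hk : 0 ≤ d n / ∑ i, d i := div_nonneg (hd n).le (sum_nonneg fun i _ ↦ (hd i).le)
  obtain ⟨c, hc, hck⟩ := exists_pos_mul_lt (sub_pos.2 hlt) (d n / ∑ i, d i)
  obtain ⟨δ, hδ, hδx, hδk⟩ : ∃ δ > 0, xne n + 2 * δ ≤ xswm n ∧
      d n / (∑ i, d i) * δ ≤ weightedAvg d xswm - weightedAvg d xne :=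
    ⟨min c ((xswm n - xne n) / 2), lt_min hc (by linarith),
      by linarith [min_le_right c ((xswm n - xne n) / 2)],
      (mul_le_mul_of_nonneg_left (min_le_left _ _) hk).trans hck.le⟩
  have hne_up := (payoff_update_le_iff d w ε g f xne n (xne n + δ)).1 <|
    hne n _ ⟨by linarith [(hne_feas n).1], by linarith [(hswm_feas n).2]⟩
  rw [add_sub_cancel_left] at hne_up
  have hswm_down := (sum_payoff_update_le_iff d w ε g f xswm n (xswm n - δ)).1 <| hswm _ <|
    (Function.forall_update_iff _ (p := fun m t ↦ t ∈ Set.Icc 0 (ε m))).2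
      ⟨⟨by linarith [(hne_feas n).1], by linarith [(hswm_feas n).2]⟩, fun m _ ↦ hswm_feas m⟩
  rw [sub_sub_cancel_left, mul_neg, ← sub_eq_add_neg] at hswm_down
  have := marginal_welfare_lt_of_marginal_payoff_le hg hg' hf (b := weightedAvg d xswm)
    (x₁ := xswm n) (sum_nonneg fun m _ ↦ (hw m).le)
    (single_le_sum (fun m _ ↦ (hw m).le) (mem_univ n)) (hd n) (mul_nonneg hk hδ.le)
    (by linarith) hδ hδx hne_up
  linarith

/-- Price of stability in label denoising: any Nash equilibrium has average noise
rate at least that of any social-welfare maximizer. -/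
theorem pos_label_denoising (N : ℕ) (d w ε : Fin N → ℝ)
    (hd : ∀ n, 0 < d n) (hw : ∀ n, 0 < w n) (hε : ∀ n, 0 ≤ ε n)
    (g f : ℝ → ℝ)
    (hg : ConcaveOn ℝ Set.univ g) (hg' : Antitone g)
    (hf : StrictConvexOn ℝ Set.univ f) (hf' : Antitone f)
    (P : Fin N → (Fin N → ℝ) → ℝ)
    (hP : P = fun n x => w n * g ((∑ i, d i * x i) / ∑ i, d i)
      - d n * (f (x n) - f (ε n)))
    (xne xswm : Fin N → ℝ)
    (hne_feas : ∀ n, xne n ∈ Set.Icc 0 (ε n))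
    (hne : ∀ n, ∀ y ∈ Set.Icc 0 (ε n), P n (Function.update xne n y) ≤ P n xne)
    (hswm_feas : ∀ n, xswm n ∈ Set.Icc 0 (ε n))
    (hswm : ∀ y : Fin N → ℝ, (∀ n, y n ∈ Set.Icc 0 (ε n)) →
      (∑ n, P n y) ≤ ∑ n, P n xswm) :
    (∑ i, d i * xswm i) / (∑ i, d i) ≤ (∑ i, d i * xne i) / (∑ i, d i) :=
  pos_label_denoising_general N d w ε hd hw g f hg hg' hf P hP xne xswm hne_feas hne hswm_feas hswm
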